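/- Let $\Gamma, \hat\Gamma$ be compact self-adjoint nonnegative operators on a separable Hilbert space with eigenvalue–eigenvector pairs $(\lambda_k, \phi_k)$ and $(\hat\lambda_k, \hat\phi_k)$. If the first eigenvalue is simple and separated, i.e. $\lambda_1 > \lambda_2$, then with an appropriate choice of sign of $\hat\phi_1$, $\|\hat\phi_1 - \phi_1\|^2 \le 8(\lambda_1 - \lambda_2)^{-2} \|\hat\Gamma - \Gamma\|_{op}^2$. -/
import Mathlib


open scoped RealInnerProductSpace

private lemma eigvec_aux (d s e : ℝ) (hd : 0 < d) (hs : 0 ≤ s)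
    (h : d / 2 * s ^ 2 ≤ e * s) : d ^ 2 * s ^ 2 ≤ 4 * e ^ 2 := by
  nlinarith [mul_le_mul_of_nonneg_left h (by linarith : (0:ℝ) ≤ 2 * d),
    sq_nonneg (d * s - 2 * e)]

/-- Lemma 4.3 of Bosq 2000, first eigenvector: if `λ₁ > λ₂`, where `λ₁`
is the top eigenvalue of `Γ` with unit eigenvector `φ₁` and `λ₂` bounds the Rayleigh
quotient of `Γ` on the orthogonal complement of `φ₁`, and `φ̂₁` is a unit top
eigenvector of `Γ̂` with sign chosen so that `⟨φ̂₁, φ₁⟩ ≥ 0`, then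
`‖φ̂₁ − φ₁‖² ≤ 8 (λ₁ − λ₂)⁻² ‖Γ̂ − Γ‖²`. -/
theorem eigenvector_perturbation {H : Type*} [NormedAddCommGroup H]
    [InnerProductSpace ℝ H] [TopologicalSpace.SeparableSpace H] [CompleteSpace H]
    (Γ Γhat : H →L[ℝ] H)
    (hΓsa : IsSelfAdjoint Γ) (hΓhatsa : IsSelfAdjoint Γhat)
    (hΓc : IsCompactOperator Γ) (hΓhatc : IsCompactOperator Γhat)
    (hΓpos : ∀ x, 0 ≤ ⟪Γ x, x⟫) (hΓhatpos : ∀ x, 0 ≤ ⟪Γhat x, x⟫)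
    (lam1 lam2 lamhat1 : ℝ) (φ1 φhat1 : H)
    (hgap : lam2 < lam1)
    (hφ1 : Γ φ1 = lam1 • φ1) (hφ1n : ‖φ1‖ = 1)
    (htop : ∀ x, ⟪Γ x, x⟫ ≤ lam1 * ‖x‖ ^ 2)
    (hlam2 : ∀ x, ⟪x, φ1⟫ = 0 → ⟪Γ x, x⟫ ≤ lam2 * ‖x‖ ^ 2)
    (hφhat1 : Γhat φhat1 = lamhat1 • φhat1) (hφhat1n : ‖φhat1‖ = 1)
    (hhattop : ∀ x, ⟪Γhat x, x⟫ ≤ lamhat1 * ‖x‖ ^ 2)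
    (hsign : 0 ≤ ⟪φhat1, φ1⟫) :
    ‖φhat1 - φ1‖ ^ 2 ≤ 8 * (lam1 - lam2)⁻¹ ^ 2 * ‖Γhat - Γ‖ ^ 2 := by
  set ε := ‖Γhat - Γ‖ with hε
  set δ := lam1 - lam2 with hδdef
  have hδ : 0 < δ := by simp [hδdef]; linarith
  have hεnn : 0 ≤ ε := norm_nonneg _
  set a := ⟪φhat1, φ1⟫ with ha
  have ha1 : a ≤ 1 := by
    have := real_inner_le_norm φhat1 φ1
    rw [hφ1n, hφhat1n] at this; simpa using this
  have hLHS : ‖φhat1 - φ1‖ ^ 2 = 2 - 2 * a := by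
    rw [norm_sub_sq_real, hφ1n, hφhat1n]; ring
  -- final goal reduction
  have hgoal : 2 - 2 * a ≤ 8 * ε ^ 2 / δ ^ 2 →
      ‖φhat1 - φ1‖ ^ 2 ≤ 8 * (lam1 - lam2)⁻¹ ^ 2 * ‖Γhat - Γ‖ ^ 2 := by
    intro h
    rw [hLHS]
    have : 8 * (lam1 - lam2)⁻¹ ^ 2 * ‖Γhat - Γ‖ ^ 2 = 8 * ε ^ 2 / δ ^ 2 := by
      rw [← hε, ← hδdef]; field_simp
    rw [this]; exact h
  apply hgoal
  rcases le_or_gt (δ / 2) ε with hcase | hcase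
  · -- trivial case: big perturbation
    have h2 : 2 ≤ 8 * ε ^ 2 / δ ^ 2 := by
      rw [le_div_iff₀ (by positivity)]
      nlinarith
    linarith
  · -- main case
    set ψ := φhat1 - a • φ1 with hψ
    have hsym : ∀ x y : H, ⟪Γ x, y⟫ = ⟪x, Γ y⟫ :=
      (ContinuousLinearMap.isSelfAdjoint_iff_isSymmetric.mp hΓsa)
    have hφ1sq : ⟪φ1, φ1⟫ = 1 := by
      rw [real_inner_self_eq_norm_sq, hφ1n]; norm_num
    have hψorth : ⟪ψ, φ1⟫ = 0 := by
      rw [hψ, inner_sub_left, real_inner_smul_left, hφ1sq, ← ha]; ring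
    have hΓψorth : ⟪Γ ψ, φ1⟫ = 0 := by
      rw [hsym, hφ1, real_inner_smul_right, hψorth, mul_zero]
    have hψsq : ‖ψ‖ ^ 2 = 1 - a ^ 2 := by
      rw [hψ, norm_sub_sq_real, real_inner_smul_right, norm_smul, hφ1n, hφhat1n, ← ha]
      simp [abs_of_nonneg hsign]
      ring
    -- lower bound on lamhat1
    have hlamhat : lam1 - ε ≤ lamhat1 := by
      have h1 : ⟪Γhat φ1, φ1⟫ ≤ lamhat1 := by
        have := hhattop φ1; rwa [hφ1n, one_pow, mul_one] at this
      have h2 : ⟪Γ φ1, φ1⟫ = lam1 := by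
        rw [hφ1, real_inner_smul_left, hφ1sq, mul_one]
      have h3 : |⟪(Γhat - Γ) φ1, φ1⟫| ≤ ε := by
        calc |⟪(Γhat - Γ) φ1, φ1⟫| ≤ ‖(Γhat - Γ) φ1‖ * ‖φ1‖ := abs_real_inner_le_norm _ _
          _ ≤ ε * 1 := by
              rw [hφ1n]
              exact mul_le_mul_of_nonneg_right ((Γhat - Γ).le_opNorm φ1 |>.trans (by rw [hφ1n, mul_one])) zero_le_one
          _ = ε := mul_one _
      have h4 : ⟪(Γhat - Γ) φ1, φ1⟫ = ⟪Γhat φ1, φ1⟫ - ⟪Γ φ1, φ1⟫ := by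
        simp [inner_sub_left]
      have := abs_le.mp h3
      linarith [this.1]
    -- key algebraic identity
    have hkey : Γ ψ - lamhat1 • ψ = (Γ - Γhat) φhat1 - (a * (lam1 - lamhat1)) • φ1 := by
      simp only [hψ, map_sub, map_smul, hφ1, hφhat1, ContinuousLinearMap.sub_apply]
      module
    -- norm bound via Pythagoras
    have hu_orth : ⟪Γ ψ - lamhat1 • ψ, (a * (lam1 - lamhat1)) • φ1⟫ = 0 := by
      rw [real_inner_smul_right, inner_sub_left, hΓψorth, real_inner_smul_left, hψorth]
      ring
    have hnormbd : ‖Γ ψ - lamhat1 • ψ‖ ≤ ε := by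
      have hpyth : ‖(Γ - Γhat) φhat1‖ ^ 2
          = ‖Γ ψ - lamhat1 • ψ‖ ^ 2 + ‖(a * (lam1 - lamhat1)) • φ1‖ ^ 2 := by
        have : (Γ - Γhat) φhat1 = (Γ ψ - lamhat1 • ψ) + (a * (lam1 - lamhat1)) • φ1 := by
          rw [hkey]; abel
        rw [this, norm_add_sq_real, hu_orth]; ring
      have h1 : ‖Γ ψ - lamhat1 • ψ‖ ^ 2 ≤ ‖(Γ - Γhat) φhat1‖ ^ 2 := by
        nlinarith [norm_nonneg ((a * (lam1 - lamhat1)) • φ1)]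
      have h2 : ‖(Γ - Γhat) φhat1‖ ≤ ε := by
        calc ‖(Γ - Γhat) φhat1‖ ≤ ‖Γ - Γhat‖ * ‖φhat1‖ := (Γ - Γhat).le_opNorm _
          _ = ε := by rw [hφhat1n, mul_one, hε, norm_sub_rev]
      nlinarith [norm_nonneg (Γ ψ - lamhat1 • ψ), norm_nonneg ((Γ - Γhat) φhat1)]
    -- Rayleigh quotient bound
    have hray : (lamhat1 - lam2) * ‖ψ‖ ^ 2 ≤ ⟪lamhat1 • ψ - Γ ψ, ψ⟫ := by
      have h1 : ⟪Γ ψ, ψ⟫ ≤ lam2 * ‖ψ‖ ^ 2 := hlam2 ψ hψorth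
      rw [inner_sub_left, real_inner_smul_left, real_inner_self_eq_norm_sq]
      nlinarith
    have hcs : ⟪lamhat1 • ψ - Γ ψ, ψ⟫ ≤ ε * ‖ψ‖ := by
      calc ⟪lamhat1 • ψ - Γ ψ, ψ⟫ ≤ ‖lamhat1 • ψ - Γ ψ‖ * ‖ψ‖ := real_inner_le_norm _ _
        _ ≤ ε * ‖ψ‖ := by
            apply mul_le_mul_of_nonneg_right _ (norm_nonneg _)
            rw [norm_sub_rev]; exact hnormbd
    -- combine: (δ/2) ‖ψ‖² ≤ ε ‖ψ‖
    have hmain : δ / 2 * ‖ψ‖ ^ 2 ≤ ε * ‖ψ‖ := by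
      have h1 : δ / 2 ≤ lamhat1 - lam2 := by
        rw [hδdef] at hcase ⊢; linarith
      exact (mul_le_mul_of_nonneg_right h1 (sq_nonneg ‖ψ‖)).trans (hray.trans hcs)
    have hψbd : δ ^ 2 * ‖ψ‖ ^ 2 ≤ 4 * ε ^ 2 :=
      eigvec_aux δ ‖ψ‖ ε hδ (norm_nonneg ψ) hmain
    -- conclude
    have ha2 : a ^ 2 ≤ a := by
      have h := mul_le_mul_of_nonneg_left ha1 hsign
      rw [mul_one] at h; rw [sq]; exact h
    have h5 : 2 - 2 * a ≤ 2 * ‖ψ‖ ^ 2 := by rw [hψsq]; linarith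
    have h6 := mul_le_mul_of_nonneg_right h5 (sq_nonneg δ)
    rw [le_div_iff₀ (by positivity)]
    linarith
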